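/- arXiv:2210.08687 — 3 statements merged into one kernel-verified Lean document; each statement's English description precedes it below -/
import Mathlib

section
/- Let E ⊂ ℝⁿ be closed with 0 ∈ E, let m ∈ ℕ, and let Ω = Allow(I^m(E)). Then for every δ > 0 there exists r̄ > 0 such that: if Ω ≠ ∅, then every x ∈ E with 0 < |x| < r̄ satisfies dist(x/|x|, Ω) < δ; and if Ω = ∅, then E ∩ B(0,r̄) = {0}. -/
open scoped BigOperators
open MvPolynomial

noncomputable section

abbrev En (n : ℕ) : Type := EuclideanSpace ℝ (Fin n)

/-- Evaluation of a polynomial at a point of ℝⁿ. -/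
def evalP {n : ℕ} (p : MvPolynomial (Fin n) ℝ) (x : En n) : ℝ :=
  MvPolynomial.eval (fun i => x i) p

/-- Truncation of a polynomial to degree ≤ m. -/
def trunc {n : ℕ} (m : ℕ) (p : MvPolynomial (Fin n) ℝ) : MvPolynomial (Fin n) ℝ :=
  ∑ d ∈ p.support,
    if (d.sum fun _ k => k) ≤ m then MvPolynomial.monomial d (p.coeff d) else 0

/-- `p` is the m-jet (m-th degree Taylor polynomial at the origin) of `F`. -/
def IsJet {n : ℕ} (m : ℕ) (F : En n → ℝ) (p : MvPolynomial (Fin n) ℝ) : Prop :=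
  p.totalDegree ≤ m ∧
    ∀ k : ℕ, k ≤ m → iteratedFDeriv ℝ k (fun x => F x - evalP p x) 0 = 0

/-- `I^m(E)`: m-jets at the origin of `C^m` functions vanishing on `E`. -/
def Im {n : ℕ} (m : ℕ) (E : Set (En n)) : Set (MvPolynomial (Fin n) ℝ) :=
  { p | ∃ F : En n → ℝ, ContDiff ℝ (m : ℕ∞) F ∧ (∀ x ∈ E, F x = 0) ∧ IsJet m F p }

/-- First-order partial derivative in the i-th coordinate direction. -/
def pderivE {n : ℕ} (i : Fin n) (F : En n → ℝ) : En n → ℝ :=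
  fun x => fderiv ℝ F x (EuclideanSpace.single i 1)

/-- Iterated partial derivative ∂^α. -/
def pdMulti {n : ℕ} (α : Fin n → ℕ) (F : En n → ℝ) : En n → ℝ :=
  (List.finRange n).foldr (fun i G => (pderivE i)^[α i] G) F

/-- |α|, the order of a multi-index. -/
def mIdeg {n : ℕ} (α : Fin n → ℕ) : ℕ := ∑ i, α i

/-- The cone `Γ(Ω,δ,r)` around a set `Ω` of directions. -/
def coneS {n : ℕ} (Ω : Set (En n)) (δ r : ℝ) : Set (En n) :=
  { x | 0 < ‖x‖ ∧ ‖x‖ < r ∧ ∃ ω ∈ Ω, ‖(‖x‖⁻¹ • x) - ω‖ < δ }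

/-- The cone `Γ(ω,δ,r)` around a single direction. -/
def cone {n : ℕ} (ω : En n) (δ r : ℝ) : Set (En n) := coneS {ω} δ r

/-- `ω` is a forbidden direction of the family `I`. -/
def Forbidden {n : ℕ} (m : ℕ) (I : Set (MvPolynomial (Fin n) ℝ)) (ω : En n) : Prop :=
  ∃ (L : ℕ) (p : Fin L → MvPolynomial (Fin n) ℝ), (∀ l, p l ∈ I) ∧
    ∃ c > 0, ∃ δ > 0, ∃ r > 0, ∀ x ∈ cone ω δ r, c * ‖x‖ ^ m < ∑ l, |evalP (p l) x|

/-- `ω` is an allowed direction of `I`. -/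
def Allowed {n : ℕ} (m : ℕ) (I : Set (MvPolynomial (Fin n) ℝ)) (ω : En n) : Prop :=
  ¬ Forbidden m I ω

/-- The set of allowed directions of `I` in the unit sphere. -/
def AllowSet {n : ℕ} (m : ℕ) (I : Set (MvPolynomial (Fin n) ℝ)) : Set (En n) :=
  { ω | ‖ω‖ = 1 ∧ Allowed m I ω }

/-- `E` is tangent to the direction `ω` at the origin. -/
def Tangent {n : ℕ} (E : Set (En n)) (ω : En n) : Prop :=
  ∀ δ > 0, ∀ r > 0, (E ∩ cone ω δ r).Nonempty

/-- `I` is an ideal in the ring `P₀^m(ℝⁿ)` of m-jets with vanishing constant term,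
with jet (truncated) multiplication. -/
def IsJetIdeal {n : ℕ} (m : ℕ) (I : Set (MvPolynomial (Fin n) ℝ)) : Prop :=
  (∀ p ∈ I, p.totalDegree ≤ m ∧ p.coeff 0 = 0) ∧
    (0 : MvPolynomial (Fin n) ℝ) ∈ I ∧
    (∀ p ∈ I, ∀ q ∈ I, p + q ∈ I) ∧
    ∀ p ∈ I, ∀ q : MvPolynomial (Fin n) ℝ, q.totalDegree ≤ m → trunc m (p * q) ∈ I

/-- The ideal of `P₀^m(ℝⁿ)` generated by a set of jets. -/
def jetSpan {n : ℕ} (m : ℕ) (s : Set (MvPolynomial (Fin n) ℝ)) :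
    Set (MvPolynomial (Fin n) ℝ) :=
  ⋂₀ { I | IsJetIdeal m I ∧ s ⊆ I }

/-- The finite set of multi-indices of order ≤ k. -/
def multiIdxLe (n k : ℕ) : Finset (Fin n → ℕ) :=
  (Fintype.piFinset fun _ => Finset.range (k + 1)).filter fun γ => (∑ i, γ i) ≤ k

/-- The degree m−|α| Taylor sum `Σ_{|γ| ≤ m−|α|} (1/γ!) ∂^{α+γ}F(w) (v−w)^γ`. -/
def taylorSum {n : ℕ} (m : ℕ) (F : En n → ℝ) (α : Fin n → ℕ) (w v : En n) : ℝ :=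
  ∑ γ ∈ multiIdxLe n (m - mIdeg α),
    ((∏ i, Nat.factorial (γ i) : ℕ) : ℝ)⁻¹ * pdMulti (fun i => α i + γ i) F w *
      ∏ i, (v i - w i) ^ γ i

/-- `F` is m-negligible for `Ω` (on the open set `U`). -/
def NegligibleFor {n : ℕ} (m : ℕ) (U Ω : Set (En n)) (F : En n → ℝ) : Prop :=
  ∀ ε > 0, ∃ δ > 0, ∃ r > 0,
    coneS Ω δ r ⊆ U ∧
    (∀ x ∈ coneS Ω δ r, ∀ α : Fin n → ℕ, mIdeg α ≤ m →
      |pdMulti α F x| ≤ ε * ‖x‖ ^ (m - mIdeg α)) ∧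
    (∀ x ∈ coneS Ω δ r, ∀ y ∈ coneS Ω δ r, x ≠ y → ∀ α : Fin n → ℕ, mIdeg α ≤ m →
      |pdMulti α F x - taylorSum m F α y x| ≤ ε * ‖x - y‖ ^ (m - mIdeg α))

/-- `F` is Whitney-m-negligible for `Ω` (on the open set `U`). -/
def WhitneyNegligible {n : ℕ} (m : ℕ) (U Ω : Set (En n)) (F : En n → ℝ) : Prop :=
  ∀ ε > 0, ∃ δ > 0, ∃ r > 0, ∃ Fε : En n → ℝ,
    coneS Ω δ r ⊆ U ∧
    ContDiffOn ℝ (m : ℕ∞) Fε {x | x ≠ 0} ∧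
    (∀ x : En n, x ≠ 0 → ∀ α : Fin n → ℕ, mIdeg α ≤ m →
      |pdMulti α Fε x| ≤ ε * ‖x‖ ^ (m - mIdeg α)) ∧
    ∀ x ∈ coneS Ω δ r, Fε x = F x

/-- The dome `D(ω,δ)` of directions around `ω`. -/
def Dset {n : ℕ} (ω : En n) (δ : ℝ) : Set (En n) := { ω' | ‖ω'‖ = 1 ∧ ‖ω' - ω‖ < δ }

/-- The annulus `Ann_K(ρ)`. -/
def Ann {n : ℕ} (K ρ : ℝ) : Set (En n) := { x | ρ / K < ‖x‖ ∧ ‖x‖ < K * ρ }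

/-- `I` implies the jet `p`. -/
def JetImplies {n : ℕ} (m : ℕ) (I : Set (MvPolynomial (Fin n) ℝ))
    (p : MvPolynomial (Fin n) ℝ) : Prop :=
  ∃ A > 0, ∃ (L : ℕ) (Q : Fin L → MvPolynomial (Fin n) ℝ), (∀ l, Q l ∈ I) ∧
    ∀ ε > 0, ∃ δ > 0, ∃ r > 0, ∀ ρ : ℝ, 0 < ρ → ρ ≤ r →
      ∃ (F : En n → ℝ) (S : Fin L → En n → ℝ),
        ContDiffOn ℝ (m : ℕ∞) F (Ann (n := n) 4 ρ) ∧
        (∀ l, ContDiffOn ℝ (m : ℕ∞) (S l) (Ann (n := n) 4 ρ)) ∧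
        (∀ x ∈ Ann (n := n) 4 ρ, ∀ α : Fin n → ℕ, mIdeg α ≤ m →
          |pdMulti α F x| ≤ ε * ρ ^ (m - mIdeg α)) ∧
        (∀ l, ∀ x ∈ Ann (n := n) 4 ρ, ∀ α : Fin n → ℕ, mIdeg α ≤ m →
          |pdMulti α (S l) x| ≤ A / ρ ^ mIdeg α) ∧
        ∀ x ∈ Ann (n := n) 2 ρ, (∃ ω ∈ AllowSet m I, ‖(‖x‖⁻¹ • x) - ω‖ < δ) →
          evalP p x = F x + ∑ l, S l x * evalP (Q l) x

/-- The closure `cl(I)` of an ideal of jets: all jets in `P₀^m(ℝⁿ)` implied by `I`. -/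
def jetClosure {n : ℕ} (m : ℕ) (I : Set (MvPolynomial (Fin n) ℝ)) :
    Set (MvPolynomial (Fin n) ℝ) :=
  { p | p.totalDegree ≤ m ∧ p.coeff 0 = 0 ∧ JetImplies m I p }

/-- `I` strongly implies `p` in the direction `ω`. -/
def StronglyImpliesAt {n : ℕ} (m : ℕ) (I : Set (MvPolynomial (Fin n) ℝ)) (ω : En n)
    (p : MvPolynomial (Fin n) ℝ) : Prop :=
  ∃ δω > 0, ∃ rω > 0, ∃ (L : ℕ) (Q : Fin L → MvPolynomial (Fin n) ℝ),
    (∀ l, Q l ∈ I) ∧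
    ∃ (S : Fin L → En n → ℝ) (C : Fin L → ℝ) (F : En n → ℝ),
      ContDiffOn ℝ (m : ℕ∞) F (cone ω δω rω) ∧
      (∀ l, ContDiffOn ℝ (m : ℕ∞) (S l) (cone ω δω rω)) ∧
      NegligibleFor m (cone ω δω rω) (AllowSet m I ∩ Dset ω δω) F ∧
      (∀ l, 0 < C l ∧ ∀ x ∈ cone ω δω rω, ∀ α : Fin n → ℕ, mIdeg α ≤ m →
        |pdMulti α (S l) x| ≤ C l / ‖x‖ ^ mIdeg α) ∧
      ∀ x ∈ cone ω δω rω, evalP p x = (∑ l, S l x * evalP (Q l) x) + F x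

/-!
A tangent direction `ω` of `E` is allowed: on `E` every jet `p ∈ I^m(E)` equals minus the Taylor
remainder of a `C^m` function vanishing on `E`, so `∑ |p_l(x)| = o(|x|^m)` along `E`, which is
incompatible with `∑ |p_l(x)| > c |x|^m` on cones around `ω` that `E` meets arbitrarily close to `0`.
The directions `x / |x|` of points of `E \ {0}` lie in the compact unit sphere, so as `x → 0` they
can only accumulate at tangent directions; hence they eventually lie within `δ` of `Allow(I^m(E))`,
and if that set is empty, a punctured ball around `0` misses `E`.
-/

open Asymptotics Filter Topology Metric

universe u

theorem isLittleO_norm_pow_of_iteratedFDeriv_eq_zero {E F : Type u} [NormedAddCommGroup E]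
    [NormedSpace ℝ E] [NormedAddCommGroup F] [NormedSpace ℝ F] {m : ℕ} {G : E → F}
    (hG : ContDiff ℝ m G) (h0 : ∀ k ≤ m, iteratedFDeriv ℝ k G 0 = 0) :
    G =o[𝓝 0] fun x => ‖x‖ ^ m := by
  have hG0 : G 0 = 0 := by
    simpa [norm_iteratedFDeriv_zero] using congrArg norm (h0 0 (Nat.zero_le m))
  induction m generalizing F with
  | zero =>
    simpa [isLittleO_one_iff, hG0] using hG.continuous.tendsto 0
  | succ m ih =>
    rw [Nat.cast_add_one, contDiff_succ_iff_fderiv] at hG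
    have hG' : fderiv ℝ G =o[𝓝 0] fun x => ‖x‖ ^ m := by
      refine ih hG.2.2 (fun k hk => norm_eq_zero.mp ?_) ?_
      · rw [norm_iteratedFDeriv_fderiv, h0 (k + 1) (by omega), norm_zero]
      · simpa [norm_iteratedFDeriv_fderiv, norm_iteratedFDeriv_zero] using
          congrArg norm (h0 1 (by omega))
    have := convex_univ.isLittleO_pow_succ (Set.mem_univ 0)
      (fun x _ => (hG.1 x).hasFDerivAt.hasFDerivWithinAt) (by simpa using hG')
    simpa [hG0] using this

theorem contDiff_evalP {n : ℕ} {k : WithTop ℕ∞} (p : MvPolynomial (Fin n) ℝ) :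
    ContDiff ℝ k (evalP p) := by
  unfold evalP
  induction p using MvPolynomial.induction_on with
  | C a => simpa using contDiff_const (c := a)
  | add p q hp hq => simpa using hp.add hq
  | mul_X p i hp => simpa using hp.mul (EuclideanSpace.proj (𝕜 := ℝ) i).contDiff

theorem isLittleO_evalP_of_mem_Im {n m : ℕ} {E : Set (En n)} {p : MvPolynomial (Fin n) ℝ}
    (hp : p ∈ Im m E) : evalP p =o[𝓝[E] 0] fun x => ‖x‖ ^ m := by
  obtain ⟨F, hF, hFE, -, hjet⟩ := hp
  have hrem : (fun x => F x - evalP p x) =o[𝓝 0] fun x => ‖x‖ ^ m :=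
    isLittleO_norm_pow_of_iteratedFDeriv_eq_zero (hF.sub (contDiff_evalP p)) hjet
  refine (hrem.mono nhdsWithin_le_nhds).neg_left.congr' ?_ EventuallyEq.rfl
  filter_upwards [self_mem_nhdsWithin] with x hx
  simp [hFE x hx]

theorem Tangent.allowed_Im {n m : ℕ} {E : Set (En n)} {ω : En n} (ht : Tangent E ω) :
    Allowed m (Im m E) ω := by
  rintro ⟨L, p, hp, c, hc, δ, hδ, r, hr, hbound⟩
  have hsum : (fun x => ∑ l, |evalP (p l) x|) =o[𝓝[E] 0] fun x => ‖x‖ ^ m :=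
    IsLittleO.fun_sum fun l _ => (isLittleO_evalP_of_mem_Im (hp l)).abs_left
  obtain ⟨r', hr', hsmall⟩ := mem_nhdsWithin_iff.mp (isLittleO_iff.mp hsum hc)
  obtain ⟨x, hxE, hx0, hxr, hxω⟩ := ht δ hδ (min r r') (lt_min hr hr')
  have hle : ‖∑ l, |evalP (p l) x|‖ ≤ c * ‖‖x‖ ^ m‖ :=
    hsmall ⟨mem_ball_zero_iff.mpr (hxr.trans_le (min_le_right _ _)), hxE⟩
  have hlt := hbound x ⟨hx0, hxr.trans_le (min_le_left _ _), hxω⟩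
  rw [norm_pow, norm_norm] at hle
  linarith [Real.le_norm_self (∑ l, |evalP (p l) x|)]

theorem tendsto_inv_norm_smul_nhdsSet_tangent {n : ℕ} (E : Set (En n)) :
    Tendsto (fun x : En n => ‖x‖⁻¹ • x) (𝓝[E \ {0}] 0)
      (𝓝ˢ {ω | ‖ω‖ = 1 ∧ Tangent E ω}) := by
  refine (isCompact_sphere (0 : En n) 1).tendsto_nhdsSet_of_mapClusterPt ?_ ?_
  · filter_upwards [self_mem_nhdsWithin] with x hx
    exact mem_sphere_zero_iff_norm.mpr (norm_smul_inv_norm (𝕜 := ℝ) hx.2)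
  · intro ω hω hclust
    refine ⟨mem_sphere_zero_iff_norm.mp hω, fun δ hδ r hr => ?_⟩
    have hnear := mapClusterPt_iff_frequently.mp hclust _ (ball_mem_nhds ω hδ)
    have hsmall : ∀ᶠ x in 𝓝[E \ {0}] (0 : En n), x ∈ (E \ {0}) ∩ ball 0 r :=
      inter_mem_nhdsWithin _ (ball_mem_nhds 0 hr)
    obtain ⟨x, hxω, ⟨hxE, hx0⟩, hxr⟩ := (hnear.and_eventually hsmall).exists
    exact ⟨x, hxE, norm_pos_iff.mpr hx0, mem_ball_zero_iff.mp hxr, ω, Set.mem_singleton ω,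
      by rwa [← dist_eq_norm]⟩

theorem E_near_allowed_directions_general {n m : ℕ} (E : Set (En n))
    (h0 : (0 : En n) ∈ E) :
    ∀ δ > 0, ∃ rbar > 0,
      ((AllowSet m (Im m E)).Nonempty →
        ∀ x ∈ E, x ≠ 0 → ‖x‖ < rbar →
          ∃ ω ∈ AllowSet m (Im m E), ‖(‖x‖⁻¹ • x) - ω‖ < δ) ∧
      (AllowSet m (Im m E) = ∅ → E ∩ Metric.ball (0 : En n) rbar = {0}) := by
  intro δ hδ
  have hsub : {ω | ‖ω‖ = 1 ∧ Tangent E ω} ⊆ AllowSet m (Im m E) :=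
    fun ω hω => ⟨hω.1, hω.2.allowed_Im⟩
  have htend := (tendsto_inv_norm_smul_nhdsSet_tangent E).mono_right (nhdsSet_mono hsub)
  obtain ⟨r, hr, hnear⟩ :=
    mem_nhdsWithin_iff.mp (htend.eventually_mem (thickening_mem_nhdsSet _ hδ))
  have hdir : ∀ x ∈ E, x ≠ 0 → ‖x‖ < r →
      ∃ ω ∈ AllowSet m (Im m E), ‖(‖x‖⁻¹ • x) - ω‖ < δ := fun x hxE hx0 hxr => by
    have hx : x ∈ ball 0 r ∩ (E \ {0}) := ⟨mem_ball_zero_iff.mpr hxr, hxE, hx0⟩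
    have hth : ‖x‖⁻¹ • x ∈ thickening δ (AllowSet m (Im m E)) := hnear hx
    obtain ⟨ω, hω, hd⟩ := mem_thickening_iff.mp hth
    exact ⟨ω, hω, by rwa [← dist_eq_norm]⟩
  refine ⟨r, hr, fun _ => hdir, fun hempty => ?_⟩
  ext x
  constructor
  · rintro ⟨hxE, hxr⟩
    by_contra hx0
    obtain ⟨ω, hω, -⟩ := hdir x hxE hx0 (mem_ball_zero_iff.mp hxr)
    simp [hempty] at hω
  · rintro rfl
    exact ⟨h0, mem_ball_self hr⟩

/-- near the origin, `E` is contained in any conic neighborhood of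
`Ω = Allow(I^m(E))`; and if `Ω = ∅` then the origin is isolated in `E`. -/
theorem E_near_allowed_directions {n m : ℕ} (E : Set (En n)) (hE : IsClosed E)
    (h0 : (0 : En n) ∈ E) :
    ∀ δ > 0, ∃ rbar > 0,
      ((AllowSet m (Im m E)).Nonempty →
        ∀ x ∈ E, x ≠ 0 → ‖x‖ < rbar →
          ∃ ω ∈ AllowSet m (Im m E), ‖(‖x‖⁻¹ • x) - ω‖ < δ) ∧
      (AllowSet m (Im m E) = ∅ → E ∩ Metric.ball (0 : En n) rbar = {0}) :=
  E_near_allowed_directions_general E h0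
end
end

section
/- Let I = ⟨p₁,…,p_t⟩_m be an ideal of P₀^m(ℝⁿ) generated by nonzero jets p₁,…,p_t. Then Allow(I) is contained in the intersection over i of the zero sets in S^{n−1} of the lowest degree homogeneous parts of the p_i. -/
open scoped BigOperators
open MvPolynomial

noncomputable section

/-!
If the lowest part `pk i` does not vanish at `ω`, then by continuity and homogeneity
`|pk i x| ≳ ‖x‖ ^ k i` on a thin cone around `ω`, while `q i x = O(‖x‖ ^ (k i + 1))`. Hence
`|p i x| ≳ ‖x‖ ^ k i ≥ ‖x‖ ^ m` near the origin in that cone, so the single generator `p i`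
already shows that `ω` is forbidden.
-/

lemma evalP_smul_of_isHomogeneous {n k : ℕ} {P : MvPolynomial (Fin n) ℝ}
    (hP : P.IsHomogeneous k) (s : ℝ) (x : En n) : evalP P (s • x) = s ^ k * evalP P x := by
  simp only [evalP, PiLp.smul_apply, smul_eq_mul, MvPolynomial.eval_eq', Finset.mul_sum]
  refine Finset.sum_congr rfl fun d hd => ?_
  rw [hP.degree_eq_sum_deg_support hd, ← Finsupp.degree_apply, Finsupp.degree_eq_sum,
    ← Finset.prod_pow_eq_pow_sum]
  simp only [mul_pow, Finset.prod_mul_distrib]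
  ring

lemma abs_evalP_le_of_coeff_eq_zero {n K : ℕ} {Q : MvPolynomial (Fin n) ℝ}
    (hQ : ∀ d : Fin n →₀ ℕ, (d.sum fun _ e => e) ≤ K → Q.coeff d = 0) {x : En n}
    (hx : ‖x‖ ≤ 1) :
    |evalP Q x| ≤ (∑ d ∈ Q.support, |Q.coeff d|) * ‖x‖ ^ (K + 1) := by
  rw [evalP, MvPolynomial.eval_eq', Finset.sum_mul]
  refine (Finset.abs_sum_le_sum_abs _ _).trans (Finset.sum_le_sum fun d hd => ?_)
  have hdeg : K + 1 ≤ ∑ i, d i := by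
    rw [← Finsupp.degree_eq_sum]
    by_contra! h
    exact MvPolynomial.mem_support_iff.mp hd (hQ d (Nat.le_of_lt_succ h))
  rw [abs_mul]
  gcongr
  calc |∏ i, x i ^ d i| = ∏ i, |x i| ^ d i := by simp only [Finset.abs_prod, abs_pow]
    _ ≤ ∏ i, ‖x‖ ^ d i := by
        gcongr with i
        exact PiLp.norm_apply_le x i
    _ = ‖x‖ ^ ∑ i, d i := Finset.prod_pow_eq_pow_sum _ _ _
    _ ≤ ‖x‖ ^ (K + 1) := pow_le_pow_of_le_one (norm_nonneg x) hx hdeg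

lemma continuous_evalP {n : ℕ} (P : MvPolynomial (Fin n) ℝ) :
    Continuous fun x : En n => evalP P x :=
  (MvPolynomial.continuous_eval P).comp (PiLp.continuous_ofLp 2 _)

lemma mem_cone {n : ℕ} {ω x : En n} {δ r : ℝ} :
    x ∈ cone ω δ r ↔ 0 < ‖x‖ ∧ ‖x‖ < r ∧ ‖‖x‖⁻¹ • x - ω‖ < δ := by
  simp [cone, coneS]

lemma exists_mul_pow_lt_abs_evalP_of_isHomogeneous {n k : ℕ} {P : MvPolynomial (Fin n) ℝ}
    (hP : P.IsHomogeneous k) {ω : En n} (hω : evalP P ω ≠ 0) :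
    ∃ δ > 0, ∀ x : En n, 0 < ‖x‖ → ‖‖x‖⁻¹ • x - ω‖ < δ →
      |evalP P ω| / 2 * ‖x‖ ^ k < |evalP P x| := by
  obtain ⟨δ, hδ, hnear⟩ := Metric.continuousAt_iff.mp (continuous_evalP P).continuousAt
    (|evalP P ω| / 2) (by positivity)
  refine ⟨δ, hδ, fun x hx hdir => ?_⟩
  have hdir' : |evalP P ω| / 2 < |evalP P (‖x‖⁻¹ • x)| := by
    have h := hnear (by rwa [dist_eq_norm])
    rw [Real.dist_eq] at h
    linarith [abs_sub_abs_le_abs_sub (evalP P ω) (evalP P (‖x‖⁻¹ • x)), abs_sub_comm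
      (evalP P ω) (evalP P (‖x‖⁻¹ • x))]
  have hscale : evalP P x = ‖x‖ ^ k * evalP P (‖x‖⁻¹ • x) := by
    rw [← evalP_smul_of_isHomogeneous hP, smul_smul, mul_inv_cancel₀ hx.ne', one_smul]
  rw [hscale, abs_mul, abs_of_pos (pow_pos hx k), mul_comm]
  gcongr

lemma exists_mul_pow_lt_abs_evalP_add_on_cone {n k : ℕ} {P Q : MvPolynomial (Fin n) ℝ}
    (hP : P.IsHomogeneous k)
    (hQ : ∀ d : Fin n →₀ ℕ, (d.sum fun _ e => e) ≤ k → Q.coeff d = 0)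
    {ω : En n} (hω : evalP P ω ≠ 0) :
    ∃ c > 0, ∃ δ > 0, ∃ r > 0, ∀ x ∈ cone ω δ r, c * ‖x‖ ^ k < |evalP (P + Q) x| := by
  obtain ⟨δ, hδ, hPlow⟩ := exists_mul_pow_lt_abs_evalP_of_isHomogeneous hP hω
  set c := |evalP P ω| / 4 with hc_def
  set C := ∑ d ∈ Q.support, |Q.coeff d|
  have hc : 0 < c := by positivity
  have hC : 0 ≤ C := Finset.sum_nonneg fun _ _ => abs_nonneg _
  refine ⟨c, hc, δ, hδ, min 1 (c / (C + 1)), by positivity, fun x hx => ?_⟩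
  obtain ⟨hx0, hxr, hdir⟩ := mem_cone.mp hx
  have hx1 : ‖x‖ ≤ 1 := hxr.le.trans (min_le_left _ _)
  have hCx : C * ‖x‖ ≤ c := by
    have h := hxr.trans_le (min_le_right _ _)
    rw [lt_div_iff₀ (by positivity)] at h
    nlinarith
  have hQx : |evalP Q x| ≤ c * ‖x‖ ^ k :=
    calc |evalP Q x| ≤ C * ‖x‖ ^ (k + 1) := abs_evalP_le_of_coeff_eq_zero hQ hx1
      _ = C * ‖x‖ * ‖x‖ ^ k := by ring
      _ ≤ c * ‖x‖ ^ k := by gcongr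
  have hPx : 2 * c * ‖x‖ ^ k < |evalP P x| := by
    convert hPlow x hx0 hdir using 2
    rw [hc_def]
    ring
  have hsum : evalP (P + Q) x = evalP P x + evalP Q x := by simp [evalP]
  have htri := abs_add_le (evalP P x + evalP Q x) (-evalP Q x)
  rw [add_neg_cancel_right, abs_neg] at htri
  rw [hsum]
  linarith

lemma forbidden_of_mul_pow_lt_abs_evalP {n m k : ℕ} {I : Set (MvPolynomial (Fin n) ℝ)}
    {p : MvPolynomial (Fin n) ℝ} (hp : p ∈ I) (hkm : k ≤ m) {ω : En n}
    (hbound : ∃ c > 0, ∃ δ > 0, ∃ r > 0, ∀ x ∈ cone ω δ r, c * ‖x‖ ^ k < |evalP p x|) :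
    Forbidden m I ω := by
  obtain ⟨c, hc, δ, hδ, r, hr, hbound⟩ := hbound
  refine ⟨1, fun _ => p, fun _ => hp, c, hc, δ, hδ, min r 1, by positivity, fun x hx => ?_⟩
  obtain ⟨hx0, hxr, hdir⟩ := mem_cone.mp hx
  calc c * ‖x‖ ^ m ≤ c * ‖x‖ ^ k :=
        mul_le_mul_of_nonneg_left
          (pow_le_pow_of_le_one hx0.le (hxr.le.trans (min_le_right _ _)) hkm) hc.le
    _ < |evalP p x| := hbound x (mem_cone.mpr ⟨hx0, hxr.trans_le (min_le_left _ _), hdir⟩)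
    _ = ∑ _ : Fin 1, |evalP p x| := by simp

lemma subset_jetSpan {n : ℕ} (m : ℕ) (s : Set (MvPolynomial (Fin n) ℝ)) : s ⊆ jetSpan m s :=
  fun _ hp _ hI => hI.2 hp

theorem allowed_subset_zero_of_lowest_parts_general {n m t : ℕ}
    (p pk q : Fin t → MvPolynomial (Fin n) ℝ) (k : Fin t → ℕ)
    (hkm : ∀ i, k i ≤ m)
    (hhom : ∀ i, (pk i).IsHomogeneous (k i))
    (hsplit : ∀ i, p i = pk i + q i)
    (hq : ∀ i, ∀ d : (Fin n) →₀ ℕ, (d.sum fun _ e => e) ≤ k i → (q i).coeff d = 0)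
    (ω : En n)
    (hallow : Allowed m (jetSpan m (Set.range p)) ω) :
    ∀ i, evalP (pk i) ω = 0 := by
  intro i
  by_contra hne
  have hbound := exists_mul_pow_lt_abs_evalP_add_on_cone (hhom i) (hq i) hne
  rw [← hsplit i] at hbound
  exact hallow (forbidden_of_mul_pow_lt_abs_evalP (subset_jetSpan m _ (Set.mem_range_self i)) (hkm i) hbound)

/-- `Allow(⟨p₁,…,p_t⟩_m)` is contained in the intersection of the zero sets on
the sphere of the lowest degree homogeneous parts of the generators. -/
theorem allowed_subset_zero_of_lowest_parts {n m t : ℕ}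
    (p pk q : Fin t → MvPolynomial (Fin n) ℝ) (k : Fin t → ℕ)
    (hk1 : ∀ i, 1 ≤ k i) (hkm : ∀ i, k i ≤ m) (hdeg : ∀ i, (p i).totalDegree ≤ m)
    (hp : ∀ i, p i ≠ 0)
    (hhom : ∀ i, (pk i).IsHomogeneous (k i)) (hpk : ∀ i, pk i ≠ 0)
    (hsplit : ∀ i, p i = pk i + q i)
    (hq : ∀ i, ∀ d : (Fin n) →₀ ℕ, (d.sum fun _ e => e) ≤ k i → (q i).coeff d = 0)
    (ω : En n) (hω : ‖ω‖ = 1)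
    (hallow : Allowed m (jetSpan m (Set.range p)) ω) :
    ∀ i, evalP (pk i) ω = 0 :=
  allowed_subset_zero_of_lowest_parts_general p pk q k hkm hhom hsplit hq ω hallow
end
end

section
/- Let m = 2, n = 3, Ω = {(0,0,1)} ⊂ S², and F(x,y,z) = y³/z defined on U = ℝ³ \ {z = 0}. Then F is 2-negligible for Ω: for every ε ∈ (0,1) there exist δ, r > 0 (one may take δ = 10^{−100}·ε^{10}, r = 1) such that the cone Γ(Ω,δ,r) ⊂ U, |∂^α F(v)| ≤ ε·|v|^{2−|α|} for all v ∈ Γ(Ω,δ,r) and all multi-indices |α| ≤ 2, and the first-order Taylor remainder estimates |∂^α F(v) − Σ_{|γ| ≤ 2−|α|} (1/γ!) ∂^{α+γ}F(w)·(v−w)^γ| ≤ ε·|v−w|^{2−|α|} hold for all distinct v, w ∈ Γ(Ω,δ,r). -/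
/-!
Write `y = v 1`, `z = v 2` and `η = ε / 1000`. On the cone around `(0,0,1)` of aperture
`ε / 2000` one has `z > 0` and `|y| ≤ η z`. Away from `z = 0` every partial derivative
`∂^α (y³/z)` vanishes if `α` involves `x`, and otherwise is a monomial `c y^(3-α₁) / z^(1+α₂)`
that is homogeneous of degree `2 - |α|` and carries a factor `y`, so on the cone it is at most
`18 η ‖v‖^(2-|α|)`. The region `{z > 0, |y| ≤ η z}` is convex, so the mean value inequality turns
the smallness of the second derivatives into the Taylor remainder bounds: directly for `|α| = 1`,
and for `α = 0` after subtracting the quadratic Taylor term, which leaves a function whose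
derivative is the first-order remainder of the gradient.
-/

open scoped BigOperators
open MvPolynomial

noncomputable section

theorem Convex.norm_image_sub_sub_le_sq_of_norm_hasFDerivWithin_sub_le
    {E F : Type*} [NormedAddCommGroup E] [NormedSpace ℝ E] [NormedAddCommGroup F]
    [NormedSpace ℝ F] {f : E → F} {f' : E → E →L[ℝ] F} {s : Set E} {C : ℝ} {v w : E}
    (hs : Convex ℝ s) (hf : ∀ x ∈ s, HasFDerivWithinAt f (f' x) s x)
    (hf' : ∀ x ∈ s, ‖f' x - f' w‖ ≤ C * ‖x - w‖) (hw : w ∈ s) (hv : v ∈ s) :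
    ‖f v - f w - f' w (v - w)‖ ≤ C * ‖v - w‖ ^ 2 := by
  rcases eq_or_ne v w with rfl | hvw
  · simp
  have hC : 0 ≤ C :=
    nonneg_of_mul_nonneg_left ((norm_nonneg _).trans (hf' v hv))
      (norm_pos_iff.2 (sub_ne_zero.2 hvw))
  -- on `s ∩ closedBall w ‖v - w‖` the derivative stays within `C * ‖v - w‖` of `f' w`
  have key := Convex.norm_image_sub_le_of_norm_hasFDerivWithin_le'
    (s := s ∩ Metric.closedBall w ‖v - w‖) (C := C * ‖v - w‖)
    (fun x hx => (hf x hx.1).mono Set.inter_subset_left)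
    (fun x hx => (hf' x hx.1).trans
      (mul_le_mul_of_nonneg_left (by simpa [dist_eq_norm] using hx.2) hC))
    (hs.inter (convex_closedBall _ _)) ⟨hw, Metric.mem_closedBall_self (norm_nonneg _)⟩
    ⟨hv, by simp [dist_eq_norm]⟩
  rwa [mul_assoc, ← sq] at key

theorem EuclideanSpace.norm_sum_smul_proj_le {n : ℕ} (a : Fin n → ℝ) :
    ‖∑ i, a i • EuclideanSpace.proj (𝕜 := ℝ) i‖ ≤ ∑ i, |a i| := by
  refine ContinuousLinearMap.opNorm_le_bound _ (Finset.sum_nonneg fun i _ => abs_nonneg _)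
    fun u => ?_
  simp only [FunLike.coe_sum, Finset.sum_apply, FunLike.coe_smul,
    Pi.smul_apply, smul_eq_mul, Finset.sum_mul, Real.norm_eq_abs]
  refine (Finset.abs_sum_le_sum_abs _ _).trans (Finset.sum_le_sum fun i _ => ?_)
  rw [abs_mul]
  exact mul_le_mul_of_nonneg_left (PiLp.norm_apply_le u i) (abs_nonneg _)

theorem mem_coneS_single {n : ℕ} {i k : Fin n} (hik : i ≠ k) {δ r : ℝ} (hδ : δ ≤ 1 / 2)
    {v : En n} (hv : v ∈ coneS {EuclideanSpace.single k 1} δ r) :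
    0 < v k ∧ |v i| ≤ 2 * δ * v k := by
  obtain ⟨hv0, -, _, rfl, hvδ⟩ := hv
  have hcoord : ∀ j, |(‖v‖⁻¹ • v - EuclideanSpace.single k 1 : En n) j| < δ := fun j =>
    (PiLp.norm_apply_le _ j).trans_lt hvδ
  have hi := hcoord i
  have hk := hcoord k
  simp only [PiLp.sub_apply, PiLp.smul_apply, smul_eq_mul, PiLp.single_apply, hik,
    if_false, if_true, sub_zero] at hi hk
  rw [abs_mul, abs_inv, abs_norm, inv_mul_lt_iff₀ hv0] at hi
  have hk' : (1 - δ) * ‖v‖ < v k := by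
    have := (abs_lt.1 hk).1
    rw [← mul_lt_mul_iff_of_pos_right hv0] at this
    field_simp at this
    nlinarith
  have hδ0 : 0 ≤ δ := (norm_nonneg _).trans hvδ.le
  have hvk : ‖v‖ ≤ 2 * v k := by nlinarith
  constructor <;> nlinarith [mul_le_mul_of_nonneg_left hvk hδ0]

open EuclideanSpace in
theorem hasFDerivAt_sum_sum_mul_sub_mul_sub_div_two {n : ℕ} {H : Fin n → Fin n → ℝ}
    (hH : ∀ i j, H i j = H j i) (w x : En n) :
    HasFDerivAt (fun y : En n => (∑ i, ∑ j, H i j * (y i - w i) * (y j - w j)) / 2)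
      (∑ i, (∑ j, H i j * (x j - w j)) • proj (𝕜 := ℝ) i) x := by
  have hcoord : ∀ i, HasFDerivAt (fun y : En n => y i - w i) (proj (𝕜 := ℝ) i) x := fun i =>
    ((proj (𝕜 := ℝ) i).hasFDerivAt (x := x)).sub_const (w i)
  have h := (HasFDerivAt.fun_sum (u := Finset.univ) fun i _ =>
    HasFDerivAt.fun_sum (u := Finset.univ) fun j _ =>
    ((hcoord i).const_mul (H i j)).fun_mul (hcoord j)).mul_const (2⁻¹ : ℝ)
  simp only [← div_eq_mul_inv] at h
  refine h.congr_fderiv (ContinuousLinearMap.ext fun u => ?_)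
  simp only [FunLike.coe_sum, Finset.sum_apply, add_apply,
    FunLike.coe_smul, Pi.smul_apply, smul_eq_mul, PiLp.proj_apply]
  have hswap : ∑ i, ∑ j, H i j * (x i - w i) * u j = ∑ i, ∑ j, H i j * (x j - w j) * u i := by
    rw [Finset.sum_comm]
    exact Finset.sum_congr rfl fun i _ => Finset.sum_congr rfl fun j _ => by rw [hH]
  have hterm : ∀ i j, (x j - w j) * (H i j * u i) = H i j * (x j - w j) * u i := fun i j => by
    ring
  simp only [Finset.sum_add_distrib, hswap, hterm, Finset.sum_mul]
  ring

theorem hasFDerivAt_mul_pow_div_pow (c : ℝ) (p q : ℕ) {x : En 3} (hx : x 2 ≠ 0) :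
    HasFDerivAt (fun v : En 3 => c * v 1 ^ p / v 2 ^ q)
      ((c * p * x 1 ^ (p - 1) / x 2 ^ q) • EuclideanSpace.proj (𝕜 := ℝ) 1 +
        (-(c * q) * x 1 ^ p / x 2 ^ (q + 1)) • EuclideanSpace.proj (𝕜 := ℝ) 2) x := by
  have hy := ((hasDerivAt_pow p (x 1)).const_mul c).comp_hasFDerivAt x
    (EuclideanSpace.proj (𝕜 := ℝ) 1).hasFDerivAt
  have hz := (hasDerivAt_zpow (-(q : ℤ)) (x 2) (Or.inl hx)).comp_hasFDerivAt x
    (EuclideanSpace.proj (𝕜 := ℝ) 2).hasFDerivAt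
  rw [show -(q : ℤ) - 1 = -((q + 1 : ℕ) : ℤ) by push_cast; ring] at hz
  have hfun : (fun v : En 3 => c * v 1 ^ p / v 2 ^ q) =
      fun v => ((fun y => c * y ^ p) ∘ EuclideanSpace.proj (𝕜 := ℝ) 1) v *
        ((fun t => t ^ (-(q : ℤ))) ∘ EuclideanSpace.proj (𝕜 := ℝ) 2) v := by
    funext v
    simp [zpow_neg, div_eq_mul_inv]
  rw [hfun]
  refine (hy.fun_mul hz).congr_fderiv (ContinuousLinearMap.ext fun u => ?_)
  simp only [add_apply, smul_apply, smul_eq_mul, Function.comp_apply,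
    PiLp.proj_apply, zpow_neg, zpow_natCast, Int.cast_neg, Int.cast_natCast, div_eq_mul_inv]
  ring

def cubeQuotPartial (α : Fin 3 → ℕ) (v : En 3) : ℝ :=
  if α 0 = 0 then
    (3 : ℕ).descFactorial (α 1) * (-1) ^ α 2 * (α 2).factorial * v 1 ^ (3 - α 1) / v 2 ^ (α 2 + 1)
  else 0

theorem hasFDerivAt_cubeQuotPartial (α : Fin 3 → ℕ) {x : En 3} (hx : x 2 ≠ 0) :
    HasFDerivAt (cubeQuotPartial α)
      (∑ i, cubeQuotPartial (α + Pi.single i 1) x • EuclideanSpace.proj (𝕜 := ℝ) i) x := by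
  by_cases hα : α 0 = 0
  · have h := hasFDerivAt_mul_pow_div_pow
      ((3 : ℕ).descFactorial (α 1) * (-1) ^ α 2 * (α 2).factorial) (3 - α 1) (α 2 + 1) hx
    rw [show cubeQuotPartial α = _ from funext fun v => if_pos hα]
    refine h.congr_fderiv ?_
    simp only [Fin.sum_univ_three, cubeQuotPartial, Pi.add_apply, Pi.single_apply]
    have h01 : (0 : Fin 3) ≠ 1 := by decide
    have h02 : (0 : Fin 3) ≠ 2 := by decide
    have h12 : (1 : Fin 3) ≠ 2 := by decide
    simp only [h01, h02, h12, h01.symm, h02.symm, h12.symm, if_true, if_false, add_zero, zero_add,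
      hα, one_ne_zero, Nat.descFactorial_succ, Nat.factorial_succ, pow_succ, Nat.sub_sub, zero_smul]
    push_cast
    congr 2 <;> ring
  · have hzero : ∀ β : Fin 3 → ℕ, β 0 ≠ 0 → cubeQuotPartial β = 0 := fun β hβ => by
      funext v; simp [cubeQuotPartial, hβ]
    rw [hzero α hα, Finset.sum_eq_zero fun i _ => by
      rw [hzero _ (by simp [hα]), Pi.zero_apply, zero_smul]]
    exact hasFDerivAt_const 0 x

theorem isOpen_coord_ne_zero {n : ℕ} (k : Fin n) : IsOpen {v : En n | v k ≠ 0} :=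
  isOpen_ne.preimage (EuclideanSpace.proj (𝕜 := ℝ) k).continuous

theorem Set.EqOn.pderivE_cubeQuotPartial {f : En 3 → ℝ} {α : Fin 3 → ℕ}
    (hf : Set.EqOn f (cubeQuotPartial α) {v | v 2 ≠ 0}) (i : Fin 3) :
    Set.EqOn (pderivE i f) (cubeQuotPartial (α + Pi.single i 1)) {v | v 2 ≠ 0} := by
  intro x hx
  have hfx : f =ᶠ[nhds x] cubeQuotPartial α :=
    Filter.eventuallyEq_of_mem ((isOpen_coord_ne_zero 2).mem_nhds hx) hf
  simp [pderivE, hfx.fderiv_eq, (hasFDerivAt_cubeQuotPartial α hx).fderiv]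

theorem Set.EqOn.iterate_pderivE_cubeQuotPartial {f : En 3 → ℝ} {α : Fin 3 → ℕ}
    (hf : Set.EqOn f (cubeQuotPartial α) {v | v 2 ≠ 0}) (i : Fin 3) (k : ℕ) :
    Set.EqOn ((pderivE i)^[k] f) (cubeQuotPartial (α + k • Pi.single i 1)) {v | v 2 ≠ 0} := by
  induction k with
  | zero => simpa using hf
  | succ k ih =>
    rw [Function.iterate_succ_apply', add_smul, one_smul, ← add_assoc]
    exact ih.pderivE_cubeQuotPartial i

theorem eqOn_pdMulti_cubeQuotPartial (α : Fin 3 → ℕ) :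
    Set.EqOn (pdMulti α fun v : En 3 => v 1 ^ 3 / v 2) (cubeQuotPartial α) {v | v 2 ≠ 0} := by
  have h0 : Set.EqOn (fun v : En 3 => v 1 ^ 3 / v 2) (cubeQuotPartial 0) {v | v 2 ≠ 0} :=
    fun v _ => by simp [cubeQuotPartial]
  have hα : 0 + α 2 • Pi.single 2 1 + α 1 • Pi.single 1 1 + α 0 • Pi.single 0 1 = α := by
    funext i; fin_cases i <;> simp
  have h := ((h0.iterate_pderivE_cubeQuotPartial 2 (α 2)).iterate_pderivE_cubeQuotPartial 1
    (α 1)).iterate_pderivE_cubeQuotPartial 0 (α 0)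
  rwa [hα] at h

def wedge (η : ℝ) : Set (En 3) := {v | 0 < v 2 ∧ |v 1| ≤ η * v 2}

theorem convex_wedge (η : ℝ) : Convex ℝ (wedge η) := by
  rintro x ⟨hx2, hx1⟩ y ⟨hy2, hy1⟩ a b ha hb hab
  simp only [wedge, Set.mem_ofPred_eq, PiLp.add_apply, PiLp.smul_apply, smul_eq_mul]
  refine ⟨?_, (abs_add_le _ _).trans ?_⟩
  · rcases ha.eq_or_lt with rfl | ha
    · simp_all
    · positivity
  · rw [abs_mul, abs_mul, abs_of_nonneg ha, abs_of_nonneg hb]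
    nlinarith [mul_le_mul_of_nonneg_left hx1 ha, mul_le_mul_of_nonneg_left hy1 hb]

theorem nonneg_of_mem_wedge {η : ℝ} {x : En 3} (hx : x ∈ wedge η) : 0 ≤ η :=
  nonneg_of_mul_nonneg_left ((abs_nonneg _).trans hx.2) hx.1

theorem abs_mul_pow_div_pow_le_of_mem_wedge {η c : ℝ} {p q : ℕ} (hqp : q ≤ p) {x : En 3}
    (hx : x ∈ wedge η) : |c * x 1 ^ p / x 2 ^ q| ≤ |c| * η ^ p * x 2 ^ (p - q) := by
  have hxq : 0 < x 2 ^ q := pow_pos hx.1 q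
  rw [abs_div, abs_mul, abs_pow, abs_of_pos hxq]
  calc |c| * |x 1| ^ p / x 2 ^ q ≤ |c| * (η * x 2) ^ p / x 2 ^ q := by gcongr; exact hx.2
    _ = |c| * η ^ p * x 2 ^ (p - q) := by
      rw [mul_pow, ← pow_sub_mul_pow (x 2) hqp]
      field_simp

theorem mIdeg_add {n : ℕ} (α β : Fin n → ℕ) : mIdeg (α + β) = mIdeg α + mIdeg β :=
  Finset.sum_add_distrib

theorem mIdeg_single {n : ℕ} (i : Fin n) : mIdeg (Pi.single i 1) = 1 := by
  simp [mIdeg]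

theorem abs_cubeQuotPartial_le {η : ℝ} (hη : η ≤ 1) {α : Fin 3 → ℕ} (hα : mIdeg α ≤ 2)
    {x : En 3} (hx : x ∈ wedge η) :
    |cubeQuotPartial α x| ≤ 18 * η * ‖x‖ ^ (2 - mIdeg α) := by
  have hη0 := nonneg_of_mem_wedge hx
  unfold cubeQuotPartial
  split_ifs with hα0
  · rw [mIdeg, Fin.sum_univ_three, hα0, zero_add] at hα ⊢
    have hcoeff : |((3 : ℕ).descFactorial (α 1) * (-1) ^ α 2 * (α 2).factorial : ℝ)| ≤ 18 := by
      have h1 : (3 : ℕ).descFactorial (α 1) ≤ 3 ^ 2 :=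
        (Nat.descFactorial_le_pow 3 (α 1)).trans (Nat.pow_le_pow_right (by norm_num) (by omega))
      have h2 : (α 2).factorial ≤ (2 : ℕ).factorial := Nat.factorial_le (by omega)
      rw [abs_mul, abs_mul, abs_pow, abs_neg, abs_one, one_pow, mul_one, Nat.abs_cast, Nat.abs_cast]
      exact_mod_cast (Nat.mul_le_mul h1 h2).trans (by norm_num)
    have hηp : η ^ (3 - α 1) ≤ η := pow_le_of_le_one hη0 hη (by omega)
    have hexp : 3 - α 1 - (α 2 + 1) = 2 - (α 1 + α 2) := by omega
    calc _ ≤ _ := abs_mul_pow_div_pow_le_of_mem_wedge (by omega) hx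
      _ ≤ 18 * η * ‖x‖ ^ (2 - (α 1 + α 2)) := by
        rw [hexp]
        gcongr
        · exact pow_nonneg hx.1.le _
        · exact hx.1.le
        · exact (le_abs_self _).trans (PiLp.norm_apply_le x 2)
  · rw [abs_zero]
    positivity

theorem sum_multiIdxLe_three_zero (D : (Fin 3 → ℕ) → ℝ) (h : Fin 3 → ℝ) :
    ∑ γ ∈ multiIdxLe 3 0, ((∏ i, (γ i).factorial : ℕ) : ℝ)⁻¹ * D γ * ∏ i, h i ^ γ i = D 0 := by
  rw [show multiIdxLe 3 0 = {0} by decide]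
  simp

theorem sum_multiIdxLe_three_one (D : (Fin 3 → ℕ) → ℝ) (h : Fin 3 → ℝ) :
    ∑ γ ∈ multiIdxLe 3 1, ((∏ i, (γ i).factorial : ℕ) : ℝ)⁻¹ * D γ * ∏ i, h i ^ γ i =
      D 0 + ∑ i, D (Pi.single i 1) * h i := by
  rw [show multiIdxLe 3 1 = {0, ![1, 0, 0], ![0, 1, 0], ![0, 0, 1]} by decide]
  rw [Fin.sum_univ_three, show (Pi.single 0 1 : Fin 3 → ℕ) = ![1, 0, 0] by decide,
    show (Pi.single 1 1 : Fin 3 → ℕ) = ![0, 1, 0] by decide,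
    show (Pi.single 2 1 : Fin 3 → ℕ) = ![0, 0, 1] by decide]
  repeat rw [Finset.sum_insert (by decide)]
  simp only [Pi.zero_apply, Nat.factorial_zero, Finset.prod_const_one, Nat.cast_one, inv_one,
    one_mul, pow_zero, mul_one, Fin.prod_univ_three, Matrix.cons_val_zero, Nat.factorial_one,
    Matrix.cons_val_one, Matrix.cons_val, pow_one, Nat.cast_mul, mul_inv_rev, Finset.sum_singleton]
  ring

theorem sum_multiIdxLe_three_two (D : (Fin 3 → ℕ) → ℝ) (h : Fin 3 → ℝ) :
    ∑ γ ∈ multiIdxLe 3 2, ((∏ i, (γ i).factorial : ℕ) : ℝ)⁻¹ * D γ * ∏ i, h i ^ γ i =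
      D 0 + ∑ i, D (Pi.single i 1) * h i +
        (∑ i, ∑ j, D (Pi.single i 1 + Pi.single j 1) * h i * h j) / 2 := by
  rw [show multiIdxLe 3 2 = {0, ![1, 0, 0], ![0, 1, 0], ![0, 0, 1], ![2, 0, 0], ![1, 1, 0],
    ![1, 0, 1], ![0, 2, 0], ![0, 1, 1], ![0, 0, 2]} by decide]
  simp only [Fin.sum_univ_three]
  rw [show (Pi.single 0 1 : Fin 3 → ℕ) = ![1, 0, 0] by decide,
    show (Pi.single 1 1 : Fin 3 → ℕ) = ![0, 1, 0] by decide,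
    show (Pi.single 2 1 : Fin 3 → ℕ) = ![0, 0, 1] by decide]
  repeat rw [Finset.sum_insert (by decide)]
  simp only [Pi.zero_apply, Nat.factorial_zero, Finset.prod_const_one, Nat.cast_one, inv_one,
    one_mul, pow_zero, mul_one, Fin.prod_univ_three, Matrix.cons_val_zero, Nat.factorial_one,
    Matrix.cons_val_one, Matrix.cons_val, pow_one, Nat.factorial_two, Nat.cast_ofNat, Nat.cast_mul,
    mul_inv_rev, Finset.sum_singleton, Matrix.add_cons, Matrix.head_cons, Matrix.tail_cons,
    add_zero, Matrix.empty_add_empty, zero_add]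
  ring

theorem taylorSum_cubeQuot {w : En 3} (hw : w 2 ≠ 0) (α : Fin 3 → ℕ) (v : En 3) :
    taylorSum 2 (fun v : En 3 => v 1 ^ 3 / v 2) α w v =
      ∑ γ ∈ multiIdxLe 3 (2 - mIdeg α),
        ((∏ i, (γ i).factorial : ℕ) : ℝ)⁻¹ * cubeQuotPartial (α + γ) w * ∏ i, (v i - w i) ^ γ i :=
  Finset.sum_congr rfl fun γ _ => by
    rw [← eqOn_pdMulti_cubeQuotPartial (α + γ) hw]
    rfl

theorem abs_cubeQuotPartial_sub_le {η : ℝ} (hη : η ≤ 1) {α : Fin 3 → ℕ} (hα : mIdeg α = 2)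
    {x w : En 3} (hx : x ∈ wedge η) (hw : w ∈ wedge η) :
    |cubeQuotPartial α x - cubeQuotPartial α w| ≤ 36 * η := by
  have hx' := abs_cubeQuotPartial_le hη hα.le hx
  have hw' := abs_cubeQuotPartial_le hη hα.le hw
  rw [hα, Nat.sub_self, pow_zero, mul_one] at hx' hw'
  linarith [abs_sub (cubeQuotPartial α x) (cubeQuotPartial α w)]

theorem abs_cubeQuotPartial_firstOrderRemainder_le {η : ℝ} (hη : η ≤ 1) {α : Fin 3 → ℕ}
    (hα : mIdeg α = 1) {x w : En 3} (hx : x ∈ wedge η) (hw : w ∈ wedge η) :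
    |cubeQuotPartial α x -
        (cubeQuotPartial α w + ∑ i, cubeQuotPartial (α + Pi.single i 1) w * (x i - w i))| ≤
      108 * η * ‖x - w‖ := by
  have hderiv : ∀ y ∈ wedge η, ‖∑ i, cubeQuotPartial (α + Pi.single i 1) y • EuclideanSpace.proj i -
      ∑ i, cubeQuotPartial (α + Pi.single i 1) w • EuclideanSpace.proj (𝕜 := ℝ) i‖ ≤ 108 * η := by
    intro y hy
    rw [← Finset.sum_sub_distrib]
    simp_rw [← sub_smul]
    refine (EuclideanSpace.norm_sum_smul_proj_le _).trans ?_
    calc _ ≤ ∑ _i : Fin 3, 36 * η := Finset.sum_le_sum fun i _ =>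
          abs_cubeQuotPartial_sub_le hη (by rw [mIdeg_add, hα, mIdeg_single]) hy hw
      _ = 108 * η := by rw [Fin.sum_const, nsmul_eq_mul, Nat.cast_ofNat]; ring
  have key := (convex_wedge η).norm_image_sub_le_of_norm_hasFDerivWithin_le'
    (fun y hy => (hasFDerivAt_cubeQuotPartial α hy.1.ne').hasFDerivWithinAt) hderiv hw hx
  simp only [Real.norm_eq_abs, FunLike.coe_sum, Finset.sum_apply, FunLike.coe_smul, Pi.smul_apply,
    smul_eq_mul, PiLp.proj_apply, PiLp.sub_apply] at key
  rwa [← sub_sub]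

theorem abs_cubeQuotPartial_zero_secondOrderRemainder_le {η : ℝ} (hη : η ≤ 1) {x w : En 3}
    (hx : x ∈ wedge η) (hw : w ∈ wedge η) :
    |cubeQuotPartial 0 x -
        (cubeQuotPartial 0 w + ∑ i, cubeQuotPartial (Pi.single i 1) w * (x i - w i) +
          (∑ i, ∑ j, cubeQuotPartial (Pi.single i 1 + Pi.single j 1) w *
            (x i - w i) * (x j - w j)) / 2)| ≤
      324 * η * ‖x - w‖ ^ 2 := by
  set H : Fin 3 → Fin 3 → ℝ := fun i j => cubeQuotPartial (Pi.single i 1 + Pi.single j 1) w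
  have hH : ∀ i j, H i j = H j i := fun i j => by simp only [H, add_comm]
  set g' := fun y : En 3 => ∑ i,
    (cubeQuotPartial (Pi.single i 1) y - ∑ j, H i j * (y j - w j)) • EuclideanSpace.proj (𝕜 := ℝ) i
  have hg : ∀ y ∈ wedge η, HasFDerivWithinAt
      (fun y => cubeQuotPartial 0 y - (∑ i, ∑ j, H i j * (y i - w i) * (y j - w j)) / 2)
      (g' y) (wedge η) y := by
    intro y hy
    have h := (hasFDerivAt_cubeQuotPartial 0 hy.1.ne').sub
      (hasFDerivAt_sum_sum_mul_sub_mul_sub_div_two hH w y)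
    simp only [zero_add, ← Finset.sum_sub_distrib, ← sub_smul] at h
    exact h.hasFDerivWithinAt
  have hg' : ∀ y ∈ wedge η, ‖g' y - g' w‖ ≤ 324 * η * ‖y - w‖ := by
    intro y hy
    simp only [g', sub_self, mul_zero, Finset.sum_const_zero, sub_zero]
    rw [← Finset.sum_sub_distrib]
    simp_rw [← sub_smul]
    refine (EuclideanSpace.norm_sum_smul_proj_le _).trans ?_
    calc _ ≤ ∑ _i : Fin 3, 108 * η * ‖y - w‖ := Finset.sum_le_sum fun i _ => by
          have := abs_cubeQuotPartial_firstOrderRemainder_le hη (mIdeg_single i) hy hw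
          rwa [add_comm, ← sub_sub] at this
      _ = 324 * η * ‖y - w‖ := by rw [Fin.sum_const, nsmul_eq_mul, Nat.cast_ofNat]; ring
  have key := (convex_wedge η).norm_image_sub_sub_le_sq_of_norm_hasFDerivWithin_sub_le hg hg' hw hx
  simp only [g', Real.norm_eq_abs, sub_self, mul_zero, Finset.sum_const_zero, zero_div, sub_zero,
    FunLike.coe_sum, Finset.sum_apply, FunLike.coe_smul, Pi.smul_apply, smul_eq_mul,
    PiLp.proj_apply, PiLp.sub_apply] at key
  convert key using 2
  ring

theorem abs_cubeQuotPartial_sub_taylor_le {η : ℝ} (hη : η ≤ 1) {α : Fin 3 → ℕ}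
    (hα : mIdeg α ≤ 2) {v w : En 3} (hv : v ∈ wedge η) (hw : w ∈ wedge η) :
    |cubeQuotPartial α v - ∑ γ ∈ multiIdxLe 3 (2 - mIdeg α),
        ((∏ i, (γ i).factorial : ℕ) : ℝ)⁻¹ * cubeQuotPartial (α + γ) w * ∏ i, (v i - w i) ^ γ i| ≤
      324 * η * ‖v - w‖ ^ (2 - mIdeg α) := by
  have hη0 := nonneg_of_mem_wedge hv
  obtain h | h | h : mIdeg α = 0 ∨ mIdeg α = 1 ∨ mIdeg α = 2 := by omega
  · obtain rfl : α = 0 := funext fun i => Finset.sum_eq_zero_iff.1 h i (Finset.mem_univ i)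
    rw [h, sum_multiIdxLe_three_two]
    simpa only [zero_add] using abs_cubeQuotPartial_zero_secondOrderRemainder_le hη hv hw
  · rw [h, sum_multiIdxLe_three_one, add_zero, pow_one]
    exact (abs_cubeQuotPartial_firstOrderRemainder_le hη h hv hw).trans (by gcongr; norm_num)
  · rw [h, sum_multiIdxLe_three_zero, add_zero, Nat.sub_self, pow_zero, mul_one]
    exact (abs_cubeQuotPartial_sub_le hη h hv hw).trans (by linarith)

/-- `F(x,y,z) = y³/z` is 2-negligible for `Ω = {(0,0,1)}` on
`U = ℝ³ \ {z = 0}`. -/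
theorem y3_div_z_negligible :
    ∀ ε : ℝ, 0 < ε → ε < 1 → ∃ δ > 0, ∃ r > 0,
      coneS ({EuclideanSpace.single (2 : Fin 3) (1 : ℝ)} : Set (En 3)) δ r ⊆
        { v : En 3 | v 2 ≠ 0 } ∧
      (∀ v ∈ coneS ({EuclideanSpace.single (2 : Fin 3) (1 : ℝ)} : Set (En 3)) δ r,
        ∀ α : Fin 3 → ℕ, mIdeg α ≤ 2 →
          |pdMulti α (fun v : En 3 => (v 1) ^ 3 / v 2) v| ≤ ε * ‖v‖ ^ (2 - mIdeg α)) ∧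
      (∀ v ∈ coneS ({EuclideanSpace.single (2 : Fin 3) (1 : ℝ)} : Set (En 3)) δ r,
        ∀ w ∈ coneS ({EuclideanSpace.single (2 : Fin 3) (1 : ℝ)} : Set (En 3)) δ r,
          v ≠ w → ∀ α : Fin 3 → ℕ, mIdeg α ≤ 2 →
            |pdMulti α (fun v : En 3 => (v 1) ^ 3 / v 2) v -
                taylorSum 2 (fun v : En 3 => (v 1) ^ 3 / v 2) α w v| ≤
              ε * ‖v - w‖ ^ (2 - mIdeg α)) := by
  intro ε hε hε1
  have hη : ε / 1000 ≤ 1 := by linarith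
  have hwedge : coneS {EuclideanSpace.single 2 1} (ε / 2000) 1 ⊆ wedge (ε / 1000) := fun v hv => by
    obtain ⟨hv2, hv1⟩ := mem_coneS_single (by decide : (1 : Fin 3) ≠ 2) (by linarith) hv
    exact ⟨hv2, by linarith⟩
  refine ⟨ε / 2000, by positivity, 1, one_pos, fun v hv => (hwedge hv).1.ne', ?_, ?_⟩
  · intro v hv α hα
    rw [eqOn_pdMulti_cubeQuotPartial α (hwedge hv).1.ne']
    exact (abs_cubeQuotPartial_le hη hα (hwedge hv)).trans (by gcongr; linarith)
  · intro v hv w hw _ α hα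
    rw [eqOn_pdMulti_cubeQuotPartial α (hwedge hv).1.ne', taylorSum_cubeQuot (hwedge hw).1.ne']
    exact (abs_cubeQuotPartial_sub_taylor_le hη hα (hwedge hv) (hwedge hw)).trans
      (by gcongr; linarith)
end
end
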